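/- arXiv:2206.08095 — 2 statements merged into one kernel-verified Lean document; each statement's English description precedes it below -/
import Mathlib

section
/- For every real α ≥ 2, the limit b(α) = lim_{n→∞} b_n(α) exists and equals inf_n b_n(α). -/
open scoped ENNReal

set_option linter.unusedSectionVars false

attribute [local instance 10] Classical.propDecidable

/-- A multigraph (parallel edges allowed): a finite edge type with two endpoint maps. -/
structure Multigraph (V : Type) where
  E : Type
  [fE : Fintype E]
  fst : E → V
  snd : E → V

attribute [instance] Multigraph.fE

namespace Multigraph

variable {V : Type} [Fintype V] [DecidableEq V]

/-- The number of edges of a multigraph. -/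
noncomputable def edgeCount (G : Multigraph V) : ℕ := Fintype.card G.E

/-- The net current flowing out of `v` under the current assignment `f`
(the current `f e` flows from `G.fst e` to `G.snd e`). -/
noncomputable def netFlow (G : Multigraph V) (f : G.E → ℝ) (v : V) : ℝ :=
  ∑ e : G.E, ((if G.fst e = v then f e else 0) - (if G.snd e = v then f e else 0))

/-- A unit flow from `x` to `y`: Kirchhoff's current law holds at every vertex other
than `x` and `y`, and the net current out of `x` is `1`. -/
def IsUnitFlow (G : Multigraph V) (x y : V) (f : G.E → ℝ) : Prop :=
  G.netFlow f x = 1 ∧ ∀ v : V, v ≠ x → v ≠ y → G.netFlow f v = 0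

/-- The effective resistance between `x` and `y`: the least energy `∑ e, (I e)^2` of a
unit flow from `x` to `y` (`∞` if there is no such flow, `0` if `x = y`). -/
noncomputable def effRes (G : Multigraph V) (x y : V) : ℝ≥0∞ :=
  if x = y then 0
  else ⨅ f : {f : G.E → ℝ // G.IsUnitFlow x y f}, ENNReal.ofReal (∑ e : G.E, (f.1 e) ^ 2)

/-- Adjacency in a multigraph. -/
def Adj (G : Multigraph V) (u v : V) : Prop :=
  ∃ e : G.E, (G.fst e = u ∧ G.snd e = v) ∨ (G.fst e = v ∧ G.snd e = u)

/-- A multigraph is connected if every vertex is reachable from every other. -/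
def Connected (G : Multigraph V) : Prop :=
  ∀ u v : V, Relation.ReflTransGen G.Adj u v

/-- The degree of a vertex (loops count twice). -/
noncomputable def degree (G : Multigraph V) (v : V) : ℕ :=
  (Finset.univ.filter fun e : G.E => G.fst e = v).card +
    (Finset.univ.filter fun e : G.E => G.snd e = v).card

/-- The number of leaves (vertices of degree 1). -/
noncomputable def leafCount (G : Multigraph V) : ℕ :=
  (Finset.univ.filter fun v : V => G.degree v = 1).card

/-- `A(G)`: the average effective resistance over unordered pairs of distinct vertices. -/
noncomputable def avgPairRes (G : Multigraph V) : ℝ≥0∞ :=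
  (∑ x : V, ∑ y : V, G.effRes x y) / (2 * ((Fintype.card V).choose 2 : ℝ≥0∞))

/-- `A'(G)`: the average effective resistance over ordered pairs of vertices. -/
noncomputable def avgOrdRes (G : Multigraph V) : ℝ≥0∞ :=
  (∑ x : V, ∑ y : V, G.effRes x y) / ((Fintype.card V : ℝ≥0∞) ^ 2)

/-- The total effective resistance to the root `ρ`. -/
noncomputable def Rtot (G : Multigraph V) (ρ : V) : ℝ≥0∞ := ∑ x : V, G.effRes ρ x

/-- `B(G)`: the average resistance of a non-root vertex to the root `ρ`. -/
noncomputable def rootedAvg (G : Multigraph V) (ρ : V) : ℝ≥0∞ :=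
  G.Rtot ρ / ((Fintype.card V - 1 : ℕ) : ℝ≥0∞)

/-- A tree: a connected multigraph with one more vertex than edge. -/
def IsTree (G : Multigraph V) : Prop := G.Connected ∧ G.edgeCount + 1 = Fintype.card V

/-- `v` is within distance `ℓ` of `x` (there is a lazy walk of length `ℓ` from `x` to `v`). -/
def WithinDist (G : Multigraph V) (ℓ : ℕ) (x v : V) : Prop :=
  ∃ p : ℕ → V, p 0 = x ∧ p ℓ = v ∧ ∀ i, i < ℓ → p i = p (i + 1) ∨ G.Adj (p i) (p (i + 1))

end Multigraph

open Multigraph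

/-- `b_n(α)`: the least value of `B(G)` over rooted graphs with `n` non-root vertices
and at most `αn/2` edges (the root may be any vertex). -/
noncomputable def bFun (n : ℕ) (α : ℝ) : ℝ≥0∞ :=
  ⨅ G : {p : Multigraph (Fin (n + 1)) × Fin (n + 1) // (p.1.edgeCount : ℝ) ≤ α * n / 2},
    rootedAvg G.1.1 G.1.2

/-- `a_n(α)`: the least value of `A'(G)` over graphs with `n` vertices and at most
`αn/2` edges. -/
noncomputable def aFun (n : ℕ) (α : ℝ) : ℝ≥0∞ :=
  ⨅ G : {G : Multigraph (Fin n) // (G.edgeCount : ℝ) ≤ α * n / 2}, avgOrdRes G.1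

/-- `G_S`: add a new root vertex `Fin.last n` joined by one edge to each entry of the
`s`-tuple (multiset) `S`. -/
noncomputable def addRoot {n : ℕ} (G : Multigraph (Fin n)) {s : ℕ} (S : Fin s → Fin n) :
    Multigraph (Fin (n + 1)) where
  E := G.E ⊕ Fin s
  fst := Sum.elim (fun e => (G.fst e).castSucc) fun _ => Fin.last n
  snd := Sum.elim (fun e => (G.snd e).castSucc) fun i => (S i).castSucc

section Trees

variable {V : Type} [Fintype V] [DecidableEq V]

/-- The map identifying all leaves of `T` to the single new vertex `Sum.inr ()`. -/
noncomputable def leafId (T : Multigraph V) (v : V) : V ⊕ Unit :=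
  if T.degree v = 1 then Sum.inr () else Sum.inl v

/-- The multigraph obtained from `T` by identifying all its leaves to one vertex. -/
noncomputable def identifyLeaves (T : Multigraph V) : Multigraph (V ⊕ Unit) where
  E := T.E
  fst := fun e => leafId T (T.fst e)
  snd := fun e => leafId T (T.snd e)

/-- `R(x,T)`: the effective resistance between `x` and the vertex obtained by
identifying all the leaves of `T`. -/
noncomputable def treeRes (T : Multigraph V) (x : V) : ℝ≥0∞ :=
  (identifyLeaves T).effRes (leafId T x) (Sum.inr ())

/-- The rooted graph formed from `T` and a set `S` of sinks: add a root `Sum.inr ()`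
joined to each `v ∈ S` by `degree v - 1` parallel edges. -/
noncomputable def randRooted (T : Multigraph V) (S : Finset V) : Multigraph (V ⊕ Unit) where
  E := T.E ⊕ (Σ v : {v : V // v ∈ S}, Fin (T.degree v.1 - 1))
  fst := Sum.elim (fun e => Sum.inl (T.fst e)) fun p => Sum.inl p.1.1
  snd := Sum.elim (fun e => Sum.inl (T.snd e)) fun _ => Sum.inr ()

/-- The subgraph induced on the vertices satisfying `P`. -/
noncomputable def inducedSub (G : Multigraph V) (P : V → Prop) : Multigraph {v : V // P v} where
  E := {e : G.E // P (G.fst e) ∧ P (G.snd e)}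
  fst := fun e => ⟨G.fst e.1, e.2.1⟩
  snd := fun e => ⟨G.snd e.1, e.2.2⟩

lemma withinDist_self (G : Multigraph V) (ℓ : ℕ) (x : V) : G.WithinDist ℓ x x :=
  ⟨fun _ => x, rfl, rfl, fun _ _ => Or.inl rfl⟩

/-- `R(x, T_x)` where `T_x` is the subgraph of `G` induced by the vertices within
distance `ℓ` of `x`. -/
noncomputable def localRes (G : Multigraph V) (ℓ : ℕ) (x : V) : ℝ≥0∞ :=
  treeRes (inducedSub G (G.WithinDist ℓ x)) ⟨x, withinDist_self G ℓ x⟩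

/-- cyclic successor on `Fin k` -/
def cycSucc {k : ℕ} (i : Fin k) : Fin k :=
  ⟨(i.1 + 1) % k, Nat.mod_lt _ (Nat.lt_of_le_of_lt (Nat.zero_le i.1) i.isLt)⟩

/-- `G` contains a cycle with `k` (distinct) vertices and `k` distinct edges. -/
def HasCycleLength (G : Multigraph V) (k : ℕ) : Prop :=
  0 < k ∧ ∃ (v : Fin k → V) (e : Fin k → G.E), Function.Injective v ∧ Function.Injective e ∧
    ∀ i : Fin k, (G.fst (e i) = v i ∧ G.snd (e i) = v (cycSucc i)) ∨
      (G.fst (e i) = v (cycSucc i) ∧ G.snd (e i) = v i)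

/-- `G⁺/x`: delete the two edges `e₁, e₂` at the degree-2 vertex `x`, add an edge
`y₁y₂` (contracting `y₁x`), and reuse `x` as a new leaf attached to the root `ρ`. -/
noncomputable def contractPlus (G : Multigraph V) (x ρ : V) (e₁ e₂ : G.E) (y₁ y₂ : V) :
    Multigraph V where
  E := {e : G.E // e ≠ e₁ ∧ e ≠ e₂} ⊕ Fin 2
  fst := Sum.elim (fun e => G.fst e.1) fun i => if i = 0 then y₁ else x
  snd := Sum.elim (fun e => G.snd e.1) fun i => if i = 0 then y₂ else ρ

end Trees

/-- A Queen-Bee network: every non-root vertex is joined to the root. -/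
def QueenBee {n : ℕ} (G : Multigraph (Fin (n + 1))) (ρ : Fin (n + 1)) : Prop :=
  ∀ v : Fin (n + 1), v ≠ ρ → G.Adj ρ v

section Weighted

variable {V : Type} [Fintype V] [DecidableEq V]

/-- A unit flow from `x` to `y` in a weighted network with conductances `c`:
antisymmetric, zero on edges of zero conductance, and satisfying Kirchhoff's
current law away from `x` and `y`, with net current `1` out of `x`. -/
def IsWUnitFlow (c : V → V → ℝ) (x y : V) (f : V → V → ℝ) : Prop :=
  (∀ u v, f u v = - f v u) ∧ (∀ u v, c u v = 0 → f u v = 0) ∧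
    (∑ v : V, f x v) = 1 ∧ ∀ u : V, u ≠ x → u ≠ y → (∑ v : V, f u v) = 0

/-- The effective resistance between `x` and `y` in the weighted network with
conductances `c`: the least energy `∑_{uv} I_{uv}²/c_{uv}` of a unit flow. -/
noncomputable def weffRes (c : V → V → ℝ) (x y : V) : ℝ≥0∞ :=
  if x = y then 0
  else ⨅ f : {f : V → V → ℝ // IsWUnitFlow c x y f},
    ENNReal.ofReal ((1 / 2) * ∑ u : V, ∑ v : V, (f.1 u v) ^ 2 / c u v)

end Weighted


/-! Let `G` be a rooted graph with `m + 1` non-root vertices and write `n + 1 = q (m + 1) + r`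
with `r ≤ m`. Gluing `q` copies of `G` at the root and hanging `r` pendant edges from it gives
a rooted graph with `n + 1` non-root vertices, within the edge budget because `α ≥ 2`. A copy of
`G` embeds in it, so resistances to the root do not increase, and pendant vertices are at
resistance `1`; hence `b_{n+1} ≤ B(G) + (m + 1)/(n + 1)`. Taking the infimum over `G`,
`b_{n+1} ≤ b_{m+1} + (m + 1)/(n + 1)` for all `m`, `n`, which forces `b_n → inf_m b_m`. -/

lemma Function.Injective.sum_extend_zero {ι κ : Type*} [Fintype ι] [Fintype κ] {ψ : ι → κ}
    (hψ : ψ.Injective) (f : ι → ℝ) (F : κ → ℝ → ℝ) (hF : ∀ k, F k 0 = 0) :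
    ∑ k, F k (Function.extend ψ f 0 k) = ∑ i, F (ψ i) (f i) :=
  (Fintype.sum_of_injective ψ hψ _ _
    (fun k hk => by rw [Function.extend_apply' _ _ _ fun ⟨i, hi⟩ => hk ⟨i, hi⟩, Pi.zero_apply, hF])
    (fun i => by rw [hψ.extend_apply])).symm

namespace Multigraph

open Function

variable {V W : Type} [Fintype V] [DecidableEq V] [Fintype W] [DecidableEq W]

@[simp]
lemma effRes_self (G : Multigraph V) (x : V) : G.effRes x x = 0 := if_pos rfl

lemma effRes_le_energy (G : Multigraph V) {x y : V} {f : G.E → ℝ} (hf : G.IsUnitFlow x y f) :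
    G.effRes x y ≤ ENNReal.ofReal (∑ e, f e ^ 2) := by
  unfold effRes
  split_ifs
  · exact zero_le
  · exact iInf_le_of_le ⟨f, hf⟩ le_rfl

lemma effRes_le_of_embedding (G : Multigraph V) (H : Multigraph W) {φ : V → W}
    (hφ : Injective φ) {ψ : G.E → H.E} (hψ : Injective ψ)
    (hfst : ∀ e, H.fst (ψ e) = φ (G.fst e)) (hsnd : ∀ e, H.snd (ψ e) = φ (G.snd e))
    (x y : V) : H.effRes (φ x) (φ y) ≤ G.effRes x y := by
  by_cases hxy : x = y
  · simp [hxy]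
  conv_rhs => rw [effRes, if_neg hxy]
  refine le_iInf fun ⟨f, hf⟩ => ?_
  have hnet : ∀ u, H.netFlow (extend ψ f 0) u =
      ∑ e, ((if φ (G.fst e) = u then f e else 0) - if φ (G.snd e) = u then f e else 0) := by
    intro u
    rw [netFlow, hψ.sum_extend_zero f
      (fun k t => (if H.fst k = u then t else 0) - if H.snd k = u then t else 0) (by simp)]
    simp only [hfst, hsnd]
  have hnet_image : ∀ v, H.netFlow (extend ψ f 0) (φ v) = G.netFlow f v := fun v => by
    rw [hnet, netFlow]
    simp only [hφ.eq_iff]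
  have hflow : H.IsUnitFlow (φ x) (φ y) (extend ψ f 0) := by
    refine ⟨(hnet_image x).trans hf.1, fun u hux huy => ?_⟩
    by_cases hu : ∃ v, φ v = u
    · obtain ⟨v, rfl⟩ := hu
      rw [hnet_image]
      exact hf.2 v (fun h => hux (h ▸ rfl)) (fun h => huy (h ▸ rfl))
    · push Not at hu
      simp [hnet, hu]
  calc H.effRes (φ x) (φ y) ≤ ENNReal.ofReal (∑ e, extend ψ f 0 e ^ 2) := effRes_le_energy H hflow
    _ = ENNReal.ofReal (∑ e, f e ^ 2) := by rw [hψ.sum_extend_zero f (fun _ t => t ^ 2) (by simp)]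

lemma effRes_le_one_of_edge (G : Multigraph V) (e : G.E) (he : G.fst e ≠ G.snd e) :
    G.effRes (G.fst e) (G.snd e) ≤ 1 := by
  have hnet : ∀ u, G.netFlow (fun e' => if e' = e then 1 else 0) u =
      (if G.fst e = u then 1 else 0) - if G.snd e = u then 1 else 0 := by
    intro u
    rw [netFlow, Finset.sum_eq_single e (fun b _ hb => by simp [hb]) (by simp)]
    simp
  have hflow : G.IsUnitFlow (G.fst e) (G.snd e) (fun e' => if e' = e then 1 else 0) :=
    ⟨by simp [hnet, Ne.symm he], fun u hu1 hu2 => by simp [hnet, Ne.symm hu1, Ne.symm hu2]⟩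
  simpa using effRes_le_energy G hflow

def map (G : Multigraph V) (φ : V → W) : Multigraph W where
  E := G.E
  fst e := φ (G.fst e)
  snd e := φ (G.snd e)

lemma Rtot_map_equiv_le (G : Multigraph V) (σ : V ≃ W) (ρ : V) :
    (G.map σ).Rtot (σ ρ) ≤ G.Rtot ρ := by
  rw [Rtot, ← σ.sum_comp]
  exact Finset.sum_le_sum fun v _ =>
    effRes_le_of_embedding G (G.map σ) σ.injective injective_id (fun _ => rfl) (fun _ => rfl) ρ v

lemma Rtot_eq_sum_subtype_ne (G : Multigraph V) (ρ : V) :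
    G.Rtot ρ = ∑ v : {v // v ≠ ρ}, G.effRes ρ v := by
  rw [Rtot, Fintype.sum_eq_add_sum_subtype_ne _ ρ, effRes_self, zero_add]

/-- The vertices of `bouquet G ρ q r`: `none` is the common root. -/
abbrev BouquetVert (ρ : V) (q r : ℕ) : Type := Option ((Fin q × {v // v ≠ ρ}) ⊕ Fin r)

def copyVert (ρ : V) {q : ℕ} (r : ℕ) (j : Fin q) (v : V) : BouquetVert ρ q r :=
  if h : v = ρ then none else some (.inl (j, ⟨v, h⟩))

lemma copyVert_root (ρ : V) {q : ℕ} (r : ℕ) (j : Fin q) : copyVert ρ r j ρ = none := dif_pos rfl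

lemma copyVert_injective (ρ : V) {q : ℕ} (r : ℕ) (j : Fin q) :
    Injective (copyVert ρ r j) := by
  intro v w h
  unfold copyVert at h
  split_ifs at h with hv hw hw <;> simp_all

def bouquet (G : Multigraph V) (ρ : V) (q r : ℕ) : Multigraph (BouquetVert ρ q r) where
  E := (Fin q × G.E) ⊕ Fin r
  fst := Sum.elim (fun p => copyVert ρ r p.1 (G.fst p.2)) fun _ => none
  snd := Sum.elim (fun p => copyVert ρ r p.1 (G.snd p.2)) fun i => some (.inr i)

lemma card_bouquetVert (ρ : V) (q r : ℕ) :
    Fintype.card (BouquetVert ρ q r) = q * (Fintype.card V - 1) + r + 1 := by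
  simp [Fintype.card_subtype_compl]

lemma edgeCount_bouquet (G : Multigraph V) (ρ : V) (q r : ℕ) :
    (G.bouquet ρ q r).edgeCount = q * G.edgeCount + r := by
  change Fintype.card ((Fin q × G.E) ⊕ Fin r) = _
  simp [edgeCount]

lemma Rtot_bouquet_le (G : Multigraph V) (ρ : V) (q r : ℕ) :
    (G.bouquet ρ q r).Rtot none ≤ q * G.Rtot ρ + r := by
  have hcopy : ∀ (j : Fin q) (v : {v // v ≠ ρ}),
      (G.bouquet ρ q r).effRes none (some (.inl (j, v))) ≤ G.effRes ρ v := fun j v => by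
    have := effRes_le_of_embedding G (G.bouquet ρ q r) (copyVert_injective ρ r j)
      (Sum.inl_injective.comp (Prod.mk_right_injective j)) (fun _ => rfl) (fun _ => rfl) ρ v
    rwa [copyVert_root, copyVert, dif_neg v.2] at this
  have hpendant : ∀ i : Fin r, (G.bouquet ρ q r).effRes none (some (.inr i)) ≤ 1 :=
    fun i => effRes_le_one_of_edge (G.bouquet ρ q r) (.inr i) (Option.some_ne_none _).symm
  rw [Rtot, Fintype.sum_option, effRes_self, zero_add, Fintype.sum_sum_type,
    Fintype.sum_prod_type, Rtot_eq_sum_subtype_ne]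
  gcongr
  · calc ∑ j : Fin q, ∑ v : {v // v ≠ ρ}, (G.bouquet ρ q r).effRes none (some (.inl (j, v)))
        ≤ ∑ _j : Fin q, ∑ v : {v // v ≠ ρ}, G.effRes ρ v := by gcongr with j _ v; exact hcopy j v
      _ = q * ∑ v : {v // v ≠ ρ}, G.effRes ρ v := by simp
  · calc ∑ i : Fin r, (G.bouquet ρ q r).effRes none (some (.inr i))
        ≤ ∑ _i : Fin r, 1 := by gcongr with i; exact hpendant i
      _ = r := by simp

end Multigraph

open Filter Topology Multigraph

lemma ENNReal.tendsto_iInf_of_le_add {ι : Type*} {l : Filter ι} {u : ι → ℝ≥0∞}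
    {ε : ι → ι → ℝ≥0∞} (hε : ∀ m, Tendsto (ε m) l (𝓝 0)) (hu : ∀ m n, u n ≤ u m + ε m n) :
    Tendsto u l (𝓝 (⨅ n, u n)) := by
  refine tendsto_order.2 ⟨fun a ha => .of_forall fun n => ha.trans_le (iInf_le u n), fun c hc => ?_⟩
  obtain ⟨m, hm⟩ := iInf_lt_iff.1 hc
  have hlim : Tendsto (fun n => u m + ε m n) l (𝓝 (u m)) := by
    simpa using tendsto_const_nhds.add (hε m)
  filter_upwards [hlim.eventually_lt_const hm] with n hn using (hu m n).trans_lt hn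

lemma bFun_le_Rtot_div {V : Type} [Fintype V] [DecidableEq V] {n : ℕ} {α : ℝ}
    (hV : Fintype.card V = n + 1) (G : Multigraph V) (ρ : V)
    (hG : (G.edgeCount : ℝ) ≤ α * n / 2) : bFun n α ≤ G.Rtot ρ / n := by
  let σ := Fintype.equivFinOfCardEq hV
  calc bFun n α ≤ (G.map σ).rootedAvg (σ ρ) := iInf_le_of_le ⟨(G.map σ, σ ρ), hG⟩ le_rfl
    _ = (G.map σ).Rtot (σ ρ) / n := by simp [rootedAvg]
    _ ≤ G.Rtot ρ / n := by gcongr; exact G.Rtot_map_equiv_le σ ρ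

lemma bFun_le_bFun_add {α : ℝ} (hα : 2 ≤ α) (m n : ℕ) :
    bFun (n + 1) α ≤ bFun (m + 1) α + ((m + 1 : ℕ) : ℝ≥0∞) / ((n + 1 : ℕ) : ℝ≥0∞) := by
  conv_rhs => rw [bFun, ENNReal.iInf_add]
  refine le_iInf fun ⟨(G, ρ), hG⟩ => ?_
  set q := (n + 1) / (m + 1)
  set r := (n + 1) % (m + 1)
  have hqr : q * (m + 1) + r = n + 1 := Nat.div_add_mod' (n + 1) (m + 1)
  have hr : r ≤ m + 1 := (Nat.mod_lt _ m.succ_pos).le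
  have hcard : Fintype.card (BouquetVert ρ q r) = (n + 1) + 1 := by
    rw [card_bouquetVert, Fintype.card_fin, Nat.add_sub_cancel, hqr]
  have hedges : ((G.bouquet ρ q r).edgeCount : ℝ) ≤ α * (n + 1 : ℕ) / 2 := by
    rw [edgeCount_bouquet, ← hqr]
    push_cast at hG ⊢
    -- each pendant edge costs `1 ≤ α / 2`
    nlinarith [mul_le_mul_of_nonneg_left hG (Nat.cast_nonneg (α := ℝ) q),
      (Nat.cast_nonneg (α := ℝ) r)]
  have hRtot : G.Rtot ρ = ((m + 1 : ℕ) : ℝ≥0∞) * G.rootedAvg ρ := by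
    rw [rootedAvg, Fintype.card_fin, Nat.add_sub_cancel,
      ENNReal.mul_div_cancel (by simp) (ENNReal.natCast_ne_top _)]
  calc bFun (n + 1) α ≤ (G.bouquet ρ q r).Rtot none / ((n + 1 : ℕ) : ℝ≥0∞) :=
        bFun_le_Rtot_div hcard _ _ hedges
    _ ≤ (q * G.Rtot ρ + r) / ((n + 1 : ℕ) : ℝ≥0∞) := by gcongr; exact G.Rtot_bouquet_le ρ q r
    _ ≤ (((n + 1 : ℕ) : ℝ≥0∞) * G.rootedAvg ρ + ((m + 1 : ℕ) : ℝ≥0∞)) /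
          ((n + 1 : ℕ) : ℝ≥0∞) := by
        rw [hRtot, ← mul_assoc]
        gcongr
        exact_mod_cast hqr ▸ Nat.le_add_right _ _
    _ = G.rootedAvg ρ + ((m + 1 : ℕ) : ℝ≥0∞) / ((n + 1 : ℕ) : ℝ≥0∞) := by
        rw [ENNReal.add_div, mul_comm,
          ENNReal.mul_div_cancel_right (by simp) (ENNReal.natCast_ne_top _)]

/-- **Lemma (existence of the limit `b(α)`).** For any `α ≥ 2`, `b_n(α)` converges as
`n → ∞` and the limit equals `inf_n b_n(α)`. -/
theorem stmt2 (α : ℝ) (hα : 2 ≤ α) :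
    Filter.Tendsto (fun n : ℕ => bFun (n + 1) α) Filter.atTop
      (nhds (⨅ n : ℕ, bFun (n + 1) α)) := by
  refine ENNReal.tendsto_iInf_of_le_add (fun m => ?_) (bFun_le_bFun_add hα)
  have hden : Tendsto (fun n : ℕ => ((n + 1 : ℕ) : ℝ≥0∞)) atTop (𝓝 ∞) :=
    ENNReal.tendsto_nat_nhds_top.comp (tendsto_add_atTop_nat 1)
  simpa using ENNReal.Tendsto.const_div hden (Or.inr (ENNReal.natCast_ne_top (m + 1)))
end

section
/- For every real α ≥ 2, b(α) ≥ 1/(α − 1). -/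
open scoped ENNReal

set_option linter.unusedSectionVars false

attribute [local instance 10] Classical.propDecidable

open Multigraph

/-!
Fix a non-root vertex `x`. Dirichlet's principle `R_{ρx} ≥ 1 / E(φ)` is tested with the potential
`φ` equal to `1` at `x`, `0` at `ρ`, and `m(x,v) / d(v)` elsewhere, where `m(x,v)` is the number of
edges joining `x` and `v` and `d(v)` the degree. Charging the energy of each edge to its ends gives
`E(φ) ≤ C(x) = m(x,ρ) + ∑ₐ m(x,a) (d(a) - m(x,a)) / d(a)`. As `m ≤ m²` for integers, summing over
`x` gives `∑ₓ C(x) ≤ 2|E| - n ≤ (α - 1) n`, and the harmonic–arithmetic mean inequality yields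
`∑ₓ R_{ρx} ≥ ∑ₓ 1 / C(x) ≥ n² / ∑ₓ C(x) ≥ n / (α - 1)`.
-/

lemma sum_mul_sub_div_le {ι : Type*} (s : Finset ι) (m : ι → ℕ) {d : ℝ} (hd : 1 ≤ d)
    (hm : ∑ i ∈ s, (m i : ℝ) ≤ d) : ∑ i ∈ s, m i * (d - m i) / d ≤ d - 1 := by
  have hd0 : 0 < d := by linarith
  calc ∑ i ∈ s, m i * (d - m i) / d ≤ ∑ i ∈ s, m i * (d - 1) / d := by
        refine Finset.sum_le_sum fun i _ => div_le_div_of_nonneg_right ?_ hd0.le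
        have : (m i : ℝ) ≤ m i * m i := by exact_mod_cast Nat.le_mul_self (m i)
        nlinarith
    _ = (∑ i ∈ s, (m i : ℝ)) * (d - 1) / d := by rw [Finset.sum_mul, Finset.sum_div]
    _ ≤ d * (d - 1) / d := by gcongr
    _ = d - 1 := by field_simp

namespace Multigraph

open Finset

variable {V : Type} [Fintype V] [DecidableEq V] (G : Multigraph V)

noncomputable def mult (u v : V) : ℕ :=
  #{e | (G.fst e = u ∧ G.snd e = v) ∨ (G.fst e = v ∧ G.snd e = u)}

lemma mult_comm (u v : V) : G.mult u v = G.mult v u := by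
  simp only [mult, or_comm]

lemma sum_card_filter_and_eq {p : G.E → Prop} [DecidablePred p] (g : G.E → V) :
    ∑ u, #{e | p e ∧ g e = u} = #{e | p e} := by
  rw [card_eq_sum_card_fiberwise (f := g) (t := univ) (fun _ _ => mem_coe.2 (mem_univ _))]
  simp only [filter_filter]

lemma sum_mult_le_degree (a : V) : ∑ u, G.mult u a ≤ G.degree a := by
  calc ∑ u, G.mult u a
      ≤ ∑ u, (#{e | G.fst e = u ∧ G.snd e = a} + #{e | G.fst e = a ∧ G.snd e = u}) :=
        sum_le_sum fun u _ => by rw [mult, filter_or]; exact card_union_le _ _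
    _ = G.degree a := by
        simp only [and_comm (a := G.fst _ = _) (b := G.snd _ = a)]
        rw [sum_add_distrib, sum_card_filter_and_eq, sum_card_filter_and_eq, degree, add_comm]

lemma mult_le_degree (u a : V) : G.mult u a ≤ G.degree a :=
  (single_le_sum (fun _ _ => Nat.zero_le _) (mem_univ u)).trans (G.sum_mult_le_degree a)

lemma sum_degree : ∑ v, G.degree v = 2 * G.edgeCount := by
  have h (g : G.E → V) : ∑ v, #{e | g e = v} = G.edgeCount :=
    (card_eq_sum_card_fiberwise fun _ _ => mem_coe.2 (mem_univ _)).symm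
  simp only [degree, sum_add_distrib, h]
  ring

lemma degree_eq_sum (a : V) : (G.degree a : ℝ) =
    ∑ e, ((if G.fst e = a then 1 else 0) + if G.snd e = a then 1 else 0) := by
  rw [degree, Nat.cast_add, natCast_card_filter, natCast_card_filter, sum_add_distrib]

lemma mult_eq_sum (u a : V) : (G.mult u a : ℝ) =
    ∑ e, if (G.fst e = u ∧ G.snd e = a) ∨ (G.fst e = a ∧ G.snd e = u) then 1 else 0 :=
  natCast_card_filter _ _

noncomputable def dirichletEnergy (φ : V → ℝ) : ℝ := ∑ e, (φ (G.fst e) - φ (G.snd e)) ^ 2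

lemma sum_mul_netFlow (f : G.E → ℝ) (φ : V → ℝ) :
    ∑ v, φ v * G.netFlow f v = ∑ e, f e * (φ (G.fst e) - φ (G.snd e)) := by
  simp only [netFlow, mul_sum]
  rw [sum_comm]
  refine sum_congr rfl fun e _ => ?_
  simp only [mul_sub, mul_ite, mul_zero, sum_sub_distrib, sum_ite_eq, mem_univ, if_true]
  ring

lemma sum_netFlow (f : G.E → ℝ) : ∑ v, G.netFlow f v = 0 := by
  simpa using G.sum_mul_netFlow f 1

variable {G}

lemma IsUnitFlow.netFlow_target {x y : V} {f : G.E → ℝ} (hf : G.IsUnitFlow x y f)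
    (hxy : x ≠ y) : G.netFlow f y = -1 := by
  have h := G.sum_netFlow f
  rw [Fintype.sum_eq_add x y hxy fun v hv => hf.2 v hv.1 hv.2, hf.1] at h
  linarith

lemma IsUnitFlow.sum_mul_sub {x y : V} {f : G.E → ℝ} (hf : G.IsUnitFlow x y f) (hxy : x ≠ y)
    (φ : V → ℝ) : ∑ e, f e * (φ (G.fst e) - φ (G.snd e)) = φ x - φ y := by
  rw [← sum_mul_netFlow, Fintype.sum_eq_add x y hxy fun v hv => by rw [hf.2 v hv.1 hv.2, mul_zero],
    hf.1, hf.netFlow_target hxy]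
  ring

lemma IsUnitFlow.sq_sub_le_mul_dirichletEnergy {x y : V} {f : G.E → ℝ}
    (hf : G.IsUnitFlow x y f) (hxy : x ≠ y) (φ : V → ℝ) :
    (φ x - φ y) ^ 2 ≤ (∑ e, f e ^ 2) * G.dirichletEnergy φ := by
  rw [← hf.sum_mul_sub hxy φ]
  exact sum_mul_sq_le_sq_mul_sq _ _ _

variable (G)

lemma ofReal_div_dirichletEnergy_le_effRes {x y : V} (hxy : x ≠ y) (φ : V → ℝ) :
    ENNReal.ofReal ((φ x - φ y) ^ 2) / ENNReal.ofReal (G.dirichletEnergy φ) ≤ G.effRes x y := by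
  rw [effRes, if_neg hxy]
  refine le_iInf fun f => ENNReal.div_le_of_le_mul ?_
  rw [← ENNReal.ofReal_mul (sum_nonneg fun _ _ => sq_nonneg _)]
  exact ENNReal.ofReal_le_ofReal (f.2.sq_sub_le_mul_dirichletEnergy hxy φ)

/-- The energy of `φ` is charged to edge ends: an end at `a ≠ x` pays `(1 - φ a)²` if the edge
goes to `x` and `φ a²` otherwise, which dominates `(φ a - φ b)²` because `φ ≥ 0`. -/
lemma dirichletEnergy_le {x : V} {φ : V → ℝ} (hφ : ∀ v, 0 ≤ φ v) (hx : φ x = 1) :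
    G.dirichletEnergy φ ≤ ∑ a ∈ univ.erase x,
      ((1 - φ a) ^ 2 * G.mult x a + φ a ^ 2 * (G.degree a - G.mult x a)) := by
  set c : V → V → ℝ := fun a b => if a = x then 0 else if b = x then (1 - φ a) ^ 2 else φ a ^ 2
  have edge (a b : V) : (φ a - φ b) ^ 2 ≤ c a b + c b a := by
    by_cases ha : a = x <;> by_cases hb : b = x <;> simp [c, ha, hb, hx] <;>
      nlinarith [hφ a, hφ b]
  have vertex (a : V) (ha : a ≠ x) :
      ∑ e, ((if G.fst e = a then c a (G.snd e) else 0) + if G.snd e = a then c a (G.fst e) else 0)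
        = (1 - φ a) ^ 2 * G.mult x a + φ a ^ 2 * (G.degree a - G.mult x a) := by
    rw [mult_eq_sum, degree_eq_sum, ← sum_sub_distrib, mul_sum, mul_sum, ← sum_add_distrib]
    refine sum_congr rfl fun e _ => ?_
    simp only [c]
    split_ifs <;> simp_all; ring
  calc G.dirichletEnergy φ ≤ ∑ e, (c (G.fst e) (G.snd e) + c (G.snd e) (G.fst e)) :=
        sum_le_sum fun e _ => edge _ _
    _ = ∑ a, ∑ e, ((if G.fst e = a then c a (G.snd e) else 0) +
          if G.snd e = a then c a (G.fst e) else 0) := by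
        rw [sum_comm]
        simp only [sum_add_distrib, sum_ite_eq, mem_univ, if_true]
    _ = _ := by
        rw [← add_sum_erase _ _ (mem_univ x)]
        simp only [c, if_true, ite_self, sum_const_zero, zero_add]
        exact sum_congr rfl fun a ha => vertex a (ne_of_mem_erase ha)

lemma one_sub_div_sq_mul_add_div_sq_mul {m d : ℝ} (hm : 0 ≤ m) (hmd : m ≤ d) :
    (1 - m / d) ^ 2 * m + (m / d) ^ 2 * (d - m) = m * (d - m) / d := by
  rcases (hm.trans hmd).eq_or_lt with hd | hd
  · obtain rfl : m = 0 := le_antisymm (hd ▸ hmd) hm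
    simp [← hd]
  · field_simp
    ring

/-- Away from `x` and `ρ`, the probability that the first step of a random walk from `v` goes
to `x`. -/
noncomputable def testPotential (ρ x v : V) : ℝ :=
  if v = x then 1 else if v = ρ then 0 else G.mult x v / G.degree v

noncomputable def conductanceBound (ρ x : V) : ℝ :=
  (G.mult x ρ : ℝ) + ∑ a ∈ (univ.erase ρ).erase x,
    (G.mult x a : ℝ) * (G.degree a - G.mult x a) / G.degree a

lemma dirichletEnergy_testPotential_le {ρ x : V} (hx : x ≠ ρ) :
    G.dirichletEnergy (G.testPotential ρ x) ≤ G.conductanceBound ρ x := by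
  have hφ (v : V) : 0 ≤ G.testPotential ρ x v := by
    unfold testPotential
    split_ifs <;> positivity
  refine (G.dirichletEnergy_le hφ (if_pos rfl)).trans_eq ?_
  rw [← add_sum_erase (M := ℝ) (univ.erase x) _ (mem_erase.2 ⟨hx.symm, mem_univ ρ⟩),
    erase_right_comm]
  simp only [testPotential, conductanceBound, if_neg hx.symm, if_true]
  congr 1
  · simp
  · refine sum_congr rfl fun a ha => ?_
    obtain ⟨hax, haρ⟩ : a ≠ x ∧ a ≠ ρ := by simp_all
    rw [if_neg hax, if_neg haρ]
    exact one_sub_div_sq_mul_add_div_sq_mul (Nat.cast_nonneg _)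
      (Nat.cast_le.2 (G.mult_le_degree x a))

lemma inv_ofReal_conductanceBound_le_effRes {ρ x : V} (hx : x ≠ ρ) :
    (ENNReal.ofReal (G.conductanceBound ρ x))⁻¹ ≤ G.effRes ρ x := by
  have h := G.ofReal_div_dirichletEnergy_le_effRes hx.symm (G.testPotential ρ x)
  simp [testPotential, hx.symm] at h
  exact (ENNReal.inv_le_inv.2 (ENNReal.ofReal_le_ofReal
    (G.dirichletEnergy_testPotential_le hx))).trans h

lemma sum_conductanceBound_le (ρ : V) (hdeg : ∀ a ≠ ρ, 1 ≤ G.degree a) :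
    ∑ x ∈ univ.erase ρ, G.conductanceBound ρ x ≤ 2 * G.edgeCount - #(univ.erase ρ) := by
  have hmult (a : V) : ∑ x ∈ univ.erase ρ, (G.mult x a : ℝ) ≤ G.degree a := by
    exact_mod_cast (sum_le_sum_of_subset (erase_subset ρ univ)).trans (G.sum_mult_le_degree a)
  have hroot := hmult ρ
  have hrest (a : V) (ha : a ∈ univ.erase ρ) : ∑ x ∈ (univ.erase ρ).erase a,
      (G.mult x a : ℝ) * (G.degree a - G.mult x a) / G.degree a ≤ G.degree a - 1 := by
    refine sum_mul_sub_div_le _ _ (by exact_mod_cast hdeg a (ne_of_mem_erase ha)) ?_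
    exact (sum_le_sum_of_subset_of_nonneg (erase_subset _ _) fun _ _ _ => by positivity).trans
      (hmult a)
  have hswap : ∑ x ∈ univ.erase ρ, ∑ a ∈ (univ.erase ρ).erase x,
        (G.mult x a : ℝ) * (G.degree a - G.mult x a) / G.degree a
      = ∑ a ∈ univ.erase ρ, ∑ x ∈ (univ.erase ρ).erase a,
        (G.mult x a : ℝ) * (G.degree a - G.mult x a) / G.degree a :=
    sum_comm' fun x a => by simp only [mem_erase]; tauto
  have hhandshake : (G.degree ρ : ℝ) + ∑ a ∈ univ.erase ρ, (G.degree a : ℝ) = 2 * G.edgeCount := by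
    rw [add_sum_erase univ (fun a => (G.degree a : ℝ)) (mem_univ ρ)]
    exact_mod_cast G.sum_degree
  have hcard : ∑ a ∈ univ.erase ρ, ((G.degree a : ℝ) - 1)
      = ∑ a ∈ univ.erase ρ, (G.degree a : ℝ) - #(univ.erase ρ) := by
    simp [sum_sub_distrib]
  simp only [conductanceBound, sum_add_distrib]
  linarith [sum_le_sum hrest]

lemma conductanceBound_eq_zero_of_degree_eq_zero {ρ x : V} (hx : G.degree x = 0) :
    G.conductanceBound ρ x = 0 := by
  have hmult (a : V) : G.mult x a = 0 := by
    simpa [hx, mult_comm] using G.mult_le_degree a x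
  simp [conductanceBound, hmult]

lemma sum_inv_ofReal_conductanceBound_le_Rtot (ρ : V) :
    ∑ x ∈ univ.erase ρ, (ENNReal.ofReal (G.conductanceBound ρ x))⁻¹ ≤ G.Rtot ρ :=
  (sum_le_sum fun _ hx => G.inv_ofReal_conductanceBound_le_effRes (ne_of_mem_erase hx)).trans
    (sum_le_sum_of_subset (erase_subset ρ univ))

lemma ofReal_div_sub_one_le_Rtot (ρ : V) {α : ℝ} {n : ℕ} (hn : n ≠ 0) (hcard : #(univ.erase ρ) = n)
    (hE : (G.edgeCount : ℝ) ≤ α * n / 2) : ENNReal.ofReal (n / (α - 1)) ≤ G.Rtot ρ := by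
  refine le_trans ?_ (G.sum_inv_ofReal_conductanceBound_le_Rtot ρ)
  by_cases hC : ∀ x ∈ univ.erase ρ, 0 < G.conductanceBound ρ x
  · have hdeg (a : V) (ha : a ≠ ρ) : 1 ≤ G.degree a := by
      by_contra! h
      have := hC a (mem_erase.2 ⟨ha, mem_univ a⟩)
      rw [G.conductanceBound_eq_zero_of_degree_eq_zero (by omega)] at this
      exact this.false
    have hsum : ∑ x ∈ univ.erase ρ, G.conductanceBound ρ x ≤ (α - 1) * n := by
      have := G.sum_conductanceBound_le ρ hdeg
      rw [hcard] at this
      linarith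
    have hpos : 0 < ∑ x ∈ univ.erase ρ, G.conductanceBound ρ x :=
      sum_pos hC (card_pos.1 (by omega))
    have hHM : (n : ℝ) ^ 2 / ∑ x ∈ univ.erase ρ, G.conductanceBound ρ x
        ≤ ∑ x ∈ univ.erase ρ, 1 / G.conductanceBound ρ x := by
      simpa [hcard] using sq_sum_div_le_sum_sq_div (univ.erase ρ) (fun _ => (1 : ℝ)) hC
    have hn' : (0 : ℝ) < n := by positivity
    have hα : 0 < α - 1 := by nlinarith
    calc ENNReal.ofReal (n / (α - 1))
        ≤ ENNReal.ofReal (∑ x ∈ univ.erase ρ, 1 / G.conductanceBound ρ x) := by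
          refine ENNReal.ofReal_le_ofReal (le_trans ?_ hHM)
          rw [div_le_div_iff₀ hα hpos]
          nlinarith
      _ = ∑ x ∈ univ.erase ρ, (ENNReal.ofReal (G.conductanceBound ρ x))⁻¹ := by
          rw [ENNReal.ofReal_sum_of_nonneg fun x hx => (one_div_pos.2 (hC x hx)).le]
          exact sum_congr rfl fun x hx => by rw [one_div, ENNReal.ofReal_inv_of_pos (hC x hx)]
  · obtain ⟨x, hx, hCx⟩ : ∃ x ∈ univ.erase ρ, G.conductanceBound ρ x ≤ 0 := by simpa using hC
    rw [ENNReal.sum_eq_top.2 ⟨x, hx, by simp [ENNReal.ofReal_eq_zero.2 hCx]⟩]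
    exact le_top

lemma ofReal_inv_sub_one_le_rootedAvg (ρ : V) {α : ℝ} {n : ℕ} (hn : n ≠ 0)
    (hcard : Fintype.card V = n + 1) (hE : (G.edgeCount : ℝ) ≤ α * n / 2) :
    ENNReal.ofReal (1 / (α - 1)) ≤ G.rootedAvg ρ := by
  have hR := G.ofReal_div_sub_one_le_Rtot ρ hn (by simp [card_erase_of_mem, hcard]) hE
  rw [rootedAvg, hcard, Nat.add_sub_cancel,
    ENNReal.le_div_iff_mul_le (Or.inl (by exact_mod_cast hn)) (Or.inl (ENNReal.natCast_ne_top n))]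
  rwa [← ENNReal.ofReal_natCast n, ← ENNReal.ofReal_mul' (Nat.cast_nonneg n), one_div_mul_eq_div]

end Multigraph

lemma ofReal_inv_sub_one_le_bFun (α : ℝ) {n : ℕ} (hn : n ≠ 0) :
    ENNReal.ofReal (1 / (α - 1)) ≤ bFun n α :=
  le_iInf fun ⟨⟨G, ρ⟩, hG⟩ => G.ofReal_inv_sub_one_le_rootedAvg ρ hn (Fintype.card_fin _) hG

theorem stmt12_general (α : ℝ) (L : ℝ≥0∞)
    (hL : Filter.Tendsto (fun n : ℕ => bFun (n + 1) α) Filter.atTop (nhds L)) :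
    ENNReal.ofReal (1 / (α - 1)) ≤ L :=
  ge_of_tendsto' hL fun n => ofReal_inv_sub_one_le_bFun α n.succ_ne_zero

/-- **Theorem (two-step lower bound).** For all `α ≥ 2`, `b(α) ≥ 1/(α-1)`. -/
theorem stmt12 (α : ℝ) (hα : 2 ≤ α) (L : ℝ≥0∞)
    (hL : Filter.Tendsto (fun n : ℕ => bFun (n + 1) α) Filter.atTop (nhds L)) :
    ENNReal.ofReal (1 / (α - 1)) ≤ L :=
  stmt12_general α L hL
end
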